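/- Let n ≥ 2, let X ⊆ ℝⁿ, and let G ≤ S_n act (⌊n/2⌋+1)-transitively on the coordinate indices {1,…,n} with X^g = X for all g ∈ G. Then for every k ∈ ℤ and every fixed neighbor N ∈ 𝒩_k: some neighbor of 𝒩_k lies in X if and only if N itself lies in X. -/

import Mathlib

/-!
Two neighbors of the same layer are both determined by the `r`-set of coordinates equal to
`d + 1`. A group that is `m`-transitive on the coordinates with `n ≤ 2m + 1` is transitive on the
`r`-sets for every `r`: directly when `r ≤ m`, and through complements otherwise. So any two
neighbors differ by a permutation in `G`, under which `X` is invariant.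
-/

open MulAction Finset Function
open scoped Pointwise

namespace Set.powersetCard

variable {G α : Type*} [Group G] [MulAction G α] [Fintype α] [DecidableEq α]

theorem isPretransitive_of_isMultiplyPretransitive_of_card_le {m k : ℕ}
    [IsMultiplyPretransitive G α m] (hm : m ≤ Fintype.card α)
    (hα : Fintype.card α ≤ 2 * m + 1) :
    IsPretransitive G (powersetCard α k) := by
  rw [← Nat.card_eq_fintype_card] at hm hα
  rcases le_or_gt k m with hkm | hmk
  · exact isPretransitive_of_isMultiplyPretransitive G (isMultiplyPretransitive_of_le hkm hm)
  rcases le_or_gt k (Nat.card α) with hk | hk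
  · have hcompl : k + (Nat.card α - k) = Fintype.card α := by
      rw [← Nat.card_eq_fintype_card]; omega
    exact IsPretransitive.of_surjective_map (mulActionHom_compl_bijective G α hcompl).surjective
      (isPretransitive_of_isMultiplyPretransitive G
        (isMultiplyPretransitive_of_le (by omega) hm))
  · have : IsEmpty (powersetCard α k) := Set.isEmpty_coe_sort.mpr (eq_empty_iff.mpr hk)
    exact ⟨fun s => isEmptyElim s⟩

end Set.powersetCard

theorem isMultiplyPretransitive_of_forall_injective {α : Type*} {G : Subgroup (Equiv.Perm α)}
    {m : ℕ} (h : ∀ f₁ f₂ : Fin m → α, Injective f₁ → Injective f₂ →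
      ∃ g ∈ G, ∀ j, g (f₁ j) = f₂ j) :
    IsMultiplyPretransitive G α m :=
  ⟨fun x y =>
    let ⟨g, hg, hxy⟩ := h x y x.injective y.injective
    ⟨⟨g, hg⟩, by ext j; exact hxy j⟩⟩

theorem comp_inv_smul_eq_of_smul_filter_eq {G α : Type*} [Group G] [MulAction G α] [Fintype α]
    [DecidableEq α] {N N' : α → ℤ} {d : ℤ}
    (hN : ∀ i, N i = d ∨ N i = d + 1) (hN' : ∀ i, N' i = d ∨ N' i = d + 1) {g : G}
    (hg : g • univ.filter (fun i => N' i = d + 1) = univ.filter (fun i => N i = d + 1)) :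
    (fun i => N' (g⁻¹ • i)) = N := by
  funext i
  have hi : N' (g⁻¹ • i) = d + 1 ↔ N i = d + 1 := by
    simpa [hg] using (Finset.inv_smul_mem_iff (a := g) (b := i)
      (s := univ.filter fun i => N' i = d + 1))
  rcases hN i with h | h <;> rcases hN' (g⁻¹ • i) with h' | h' <;> omega

theorem one_neighbor_suffices_general (n : ℕ) (hn : 2 ≤ n) (X : Set (Fin n → ℝ))
    (G : Subgroup (Equiv.Perm (Fin n)))
    (hinv : ∀ g ∈ G, (fun x : Fin n → ℝ => fun i => x (g⁻¹ i)) '' X = X)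
    (htrans : ∀ f₁ f₂ : Fin (n / 2 + 1) → Fin n,
      Function.Injective f₁ → Function.Injective f₂ →
      ∃ g ∈ G, ∀ j, g (f₁ j) = f₂ j)
    (d : ℤ) (r : ℕ) (N : Fin n → ℤ)
    (hN : (∀ i, N i = d ∨ N i = d + 1) ∧
      (Finset.univ.filter fun i => N i = d + 1).card = r) :
    (∃ N' : Fin n → ℤ,
        ((∀ i, N' i = d ∨ N' i = d + 1) ∧
          (Finset.univ.filter fun i => N' i = d + 1).card = r) ∧
        (fun i => (N' i : ℝ)) ∈ X) ↔
      (fun i => (N i : ℝ)) ∈ X := by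
  refine ⟨fun ⟨N', ⟨hN'val, hN'card⟩, hN'X⟩ => ?_, fun hNX => ⟨N, hN, hNX⟩⟩
  have := isMultiplyPretransitive_of_forall_injective htrans
  have htransSets := Set.powersetCard.isPretransitive_of_isMultiplyPretransitive_of_card_le
    (G := G) (α := Fin n) (k := r) (m := n / 2 + 1) (by rw [Fintype.card_fin]; omega)
    (by rw [Fintype.card_fin]; omega)
  obtain ⟨g, hg⟩ := htransSets.exists_smul_eq
    (⟨_, hN'card⟩ : Set.powersetCard (Fin n) r) (⟨_, hN.2⟩ : Set.powersetCard (Fin n) r)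
  have hN'g : (fun i => N' (g⁻¹ • i)) = N :=
    comp_inv_smul_eq_of_smul_filter_eq hN.1 hN'val (congrArg Subtype.val hg)
  rw [← hN'g, ← hinv g g.2]
  exact ⟨_, hN'X, rfl⟩

/-- Let `n ≥ 2`, `X ⊆ ℝⁿ` invariant under a group `G` acting
`(⌊n/2⌋+1)`-transitively on the coordinates, and let `k = dn + r`. Then for any fixed
neighbor `N ∈ 𝒩_k`, some neighbor of `𝒩_k` lies in `X` iff `N` itself lies in `X`. -/
theorem one_neighbor_suffices (n : ℕ) (hn : 2 ≤ n) (X : Set (Fin n → ℝ))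
    (G : Subgroup (Equiv.Perm (Fin n)))
    (hinv : ∀ g ∈ G, (fun x : Fin n → ℝ => fun i => x (g⁻¹ i)) '' X = X)
    (htrans : ∀ f₁ f₂ : Fin (n / 2 + 1) → Fin n,
      Function.Injective f₁ → Function.Injective f₂ →
      ∃ g ∈ G, ∀ j, g (f₁ j) = f₂ j)
    (d : ℤ) (r : ℕ) (hr : r < n) (N : Fin n → ℤ)
    (hN : (∀ i, N i = d ∨ N i = d + 1) ∧
      (Finset.univ.filter fun i => N i = d + 1).card = r) :
    (∃ N' : Fin n → ℤ,
        ((∀ i, N' i = d ∨ N' i = d + 1) ∧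
          (Finset.univ.filter fun i => N' i = d + 1).card = r) ∧
        (fun i => (N' i : ℝ)) ∈ X) ↔
      (fun i => (N i : ℝ)) ∈ X :=
  one_neighbor_suffices_general n hn X G hinv htrans d r N hN
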